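/- Let μ ∈ ℤ^k. The map sending a tunnel hook covering γ of D_μ with terminal cells τ_r = (p_r,q_r) (r = 1,…,k) to the sequence σ(γ) = (p_1 − q_1 + 1, p_2 − q_2 + 1, …, p_k − q_k + 1) is a bijection from the set of tunnel hook coverings of D_μ onto the symmetric group S_k; its inverse sends σ ∈ S_k to the tunnel hook covering with terminal cells τ_r = (σ_r + m_r, 1 + m_r), where m_r = #{ i ∈ {1,…,k} : i < r and σ_i > σ_r }. -/

import Mathlib

open scoped BigOperators

/-- NSym modeled as the free noncommutative ℚ-algebra on generators indexed by ℕ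
(the generator `n` playing the role of `H_n` for `n ≥ 1`). -/
abbrev NSym : Type := FreeAlgebra ℚ ℕ

/-- The complete homogeneous noncommutative symmetric functions, extended to ℤ:
`H 0 = 1`, `H n = 0` for `n < 0`, and `H n` the `n`-th generator for `n ≥ 1`. -/
noncomputable def H (n : ℤ) : NSym :=
  if n < 0 then 0 else if n = 0 then 1 else FreeAlgebra.ι ℚ n.toNat

/-- `DecFrom k r ν` : `ν_r ≥ ν_{r+1} ≥ … ≥ ν_k` (1-based indexing). -/
def DecFrom (k r : ℕ) (ν : ℕ → ℕ) : Prop :=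
  ∀ i, r ≤ i → i < k → ν (i + 1) ≤ ν i

/-- `(p,q)` is a boundary cell of the partial GBPR diagram `D^{(r-1)}_{μ/ν}`. -/
def IsBoundary (k r : ℕ) (μ : ℕ → ℤ) (ν : ℕ → ℕ) (p q : ℕ) : Prop :=
  r ≤ p ∧ p ≤ k ∧
    (if p = r then
      ν r + 1 ≤ q ∧ (q : ℤ) ≤ max ((ν r : ℤ) + 1) (max (μ r) (2 * (ν r : ℤ) - μ r))
    else
      ν p + 1 ≤ q ∧ q ≤ ν (p - 1) + 1)

/-- `(p,q)` is a tunnel cell of `D^{(r-1)}_{μ/ν}`. -/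
def IsTunnel (k r : ℕ) (μ : ℕ → ℤ) (ν : ℕ → ℕ) (p q : ℕ) : Prop :=
  IsBoundary k r μ ν p q ∧ q = ν p + 1

/-- The set of boundary cells of `D^{(r-1)}_{μ/ν}` not tunnel cells. -/
def IsN (k r : ℕ) (μ : ℕ → ℤ) (ν : ℕ → ℕ) (p q : ℕ) : Prop :=
  IsBoundary k r μ ν p q ∧ ¬ IsTunnel k r μ ν p q

/-- The tunnel hook `h(r,τ)` for a tunnel cell `τ = (p,q)` of `D^{(r-1)}_{μ/ν}`:
all boundary cells in rows `r` through `p`. -/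
def hook (k r : ℕ) (μ : ℕ → ℤ) (ν : ℕ → ℕ) (p : ℕ) : Set (ℕ × ℕ) :=
  {c : ℕ × ℕ | IsBoundary k r μ ν c.1 c.2 ∧ c.1 ≤ p}

/-- The value `Δ(h(r,τ)) = (μ_r − ν_r) + (ν_r + 1 − q) + (p − r)` for `τ = (p,q)`. -/
def hookDelta (μ : ℕ → ℤ) (ν : ℕ → ℕ) (r p q : ℕ) : ℤ :=
  (μ r - (ν r : ℤ)) + (((ν r : ℤ) + 1) - (q : ℤ)) + ((p : ℤ) - (r : ℤ))

/-- The update `ν ↦ ν^{(r)}`: `ν'_i = ν_{i-1} + 1` for `r < i ≤ p`, else `ν'_i = ν_i`. -/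
def nuUpdate (ν : ℕ → ℕ) (r p : ℕ) : ℕ → ℕ := fun i =>
  if r < i ∧ i ≤ p then ν (i - 1) + 1 else ν i

/-- The sequence `ν^{(0)}, ν^{(1)}, …` of intermediate shapes of a tunnel hook covering
with terminal rows `p 1, p 2, …`. -/
def nuSeq (ν₀ : ℕ → ℕ) (p : ℕ → ℕ) : ℕ → ℕ → ℕ
  | 0 => ν₀
  | r + 1 => nuUpdate (nuSeq ν₀ p r) (r + 1) (p (r + 1))

/-- A tunnel hook covering of `D_{μ/ν₀}` : for each `r = 1, …, k` a tunnel cell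
`(p r, q r)` of `D^{(r-1)}_{μ/ν^{(r-1)}}` (values outside `1 ≤ r ≤ k` normalized to `0`). -/
structure THC (k : ℕ) (μ : ℕ → ℤ) (ν₀ : ℕ → ℕ) where
  p : ℕ → ℕ
  q : ℕ → ℕ
  tunnel : ∀ r, 1 ≤ r → r ≤ k → IsTunnel k r μ (nuSeq ν₀ p (r - 1)) (p r) (q r)
  p_out : ∀ r, r = 0 ∨ k < r → p r = 0
  q_out : ∀ r, r = 0 ∨ k < r → q r = 0

/-- Row-ordered noncommutative determinant (Laplace expansion from the top row down). -/
noncomputable def ndet {k : ℕ} (A : Fin k → Fin k → NSym) : NSym :=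
  ∑ σ : Equiv.Perm (Fin k),
    ((Equiv.Perm.sign σ : ℤ) • (List.ofFn fun i => A i (σ i)).prod)

/-- The immaculate function `I_μ = ndet (H_{μ_i + j − i})` (1-based `μ`). -/
noncomputable def Imm (k : ℕ) (μ : ℕ → ℤ) : NSym :=
  ndet fun i j : Fin k => H (μ (i.1 + 1) + ((j.1 : ℤ) + 1) - ((i.1 : ℤ) + 1))

/-- The skew immaculate function `I_{μ/ν} = ndet (H_{(μ_i − i) − (ν_j − j)})`. -/
noncomputable def ImmSkew (k : ℕ) (μ ν : ℕ → ℤ) : NSym :=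
  ndet fun i j : Fin k =>
    H ((μ (i.1 + 1) - ((i.1 : ℤ) + 1)) - (ν (j.1 + 1) - ((j.1 : ℤ) + 1)))

/-- The signed product `∏_{r=1}^{k} ε(h(r,τ_r)) H_{Δ(h(r,τ_r))}` attached to a
tunnel hook covering, the product taken in the order `r = 1, …, k`. -/
noncomputable def thcTerm (k : ℕ) (μ : ℕ → ℤ) (ν₀ : ℕ → ℕ) (γ : THC k μ ν₀) : NSym :=
  (List.ofFn fun r : Fin k =>
    (-1 : NSym) ^ (γ.p (r.1 + 1) - (r.1 + 1)) *
      H (hookDelta μ (nuSeq ν₀ γ.p r.1) (r.1 + 1) (γ.p (r.1 + 1)) (γ.q (r.1 + 1)))).prod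
/-- Two cells are adjacent iff their taxicab distance is 1. -/
def Adj (c d : ℕ × ℕ) : Prop :=
  ((c.1 : ℤ) - (d.1 : ℤ)).natAbs + ((c.2 : ℤ) - (d.2 : ℤ)).natAbs = 1

/-- A set of cells is connected: any two of its cells are joined by a chain of
cells of the set in which consecutive cells are adjacent. -/
def ConnectedSet (C : Set (ℕ × ℕ)) : Prop :=
  ∀ c ∈ C, ∀ d ∈ C, ∃ l : List (ℕ × ℕ),
    l.head? = some c ∧ l.getLast? = some d ∧ (∀ x ∈ l, x ∈ C) ∧ l.Chain' Adj

/-- `m_r = #{ i < r : σ_i > σ_r }`. -/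
def mcount {k : ℕ} (σ : Equiv.Perm (Fin k)) (r : Fin k) : ℕ :=
  (Finset.univ.filter fun i : Fin k => i < r ∧ σ r < σ i).card

/-- The set `{σ_{r+1}, …, σ_k}` of one-line (1-based) values of `σ` at positions `> r`. -/
def onelineTail {k : ℕ} (σ : Equiv.Perm (Fin k)) (r : ℕ) : Finset ℕ :=
  (Finset.univ.filter fun i : Fin k => r < i.1 + 1).image fun i => (σ i).1 + 1

/-- `beta σ r t` : the `t`-th smallest element of `{σ_{r+1}, …, σ_k}`. -/
def beta {k : ℕ} (σ : Equiv.Perm (Fin k)) (r t : ℕ) : ℕ :=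
  ((onelineTail σ r).sort (· ≤ ·)).getD (t - 1) 0

/-- The exponent `δ` in the sign of a linear permutation `π ∈ A_{k,m}`. -/
def lpInv {k m : ℕ} (π : Fin m ↪ Fin k) : ℕ :=
  (Finset.univ.filter fun p : Fin m × Fin m => p.1 < p.2 ∧ π p.2 < π p.1).card +
  (Finset.univ.filter fun p : Fin m × Fin k => (∀ t, π t ≠ p.2) ∧ p.2 < π p.1).card

/-- `betaC π j` : the `j`-th smallest element of `{1,…,k} ∖ {π_1,…,π_m}` (1-based values). -/
def betaC {k m : ℕ} (π : Fin m ↪ Fin k) (j : ℕ) : ℕ :=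
  (((Finset.univ.filter fun q : Fin k => ∀ t, π t ≠ q).image fun q => q.1 + 1).sort
    (· ≤ ·)).getD (j - 1) 0

/-- Coarsening `Θ(α,S)` of a sequence: replace the comma at each position in `S`
(1-based; position `i` lies between parts `i` and `i+1`) by addition. -/
def theta {α : Type} [Add α] (S : Finset ℕ) : ℕ → List α → List α
  | _, [] => []
  | _, [a] => [a]
  | i, a :: b :: rest =>
      if i ∈ S then theta S (i + 1) ((a + b) :: rest)
      else a :: theta S (i + 1) (b :: rest)
  termination_by i l => l.length

noncomputable def Hlist (β : List ℤ) : NSym := (β.map H).prod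

/-- The ribbon function `R_β = Σ_{γ ⪰ β} (−1)^{ℓ(β)−ℓ(γ)} H_γ`, with `R_β = 0`
whenever `β` has a part `≤ 0`. -/
noncomputable def Ribbon (β : List ℤ) : NSym :=
  if ∀ x ∈ β, 0 < x then
    ∑ S ∈ (Finset.Icc 1 (β.length - 1)).powerset,
      (-1 : NSym) ^ (β.length - (theta S 1 β).length) * Hlist (theta S 1 β)
  else 0

/-!
Read `x - ν^{(r)}_x` as a value sitting in row `x`. Initially row `x` holds `x`; the `r`-th
tunnel hook, with terminal row `p_r`, removes the value `p_r - q_r + 1` of row `p_r` and moves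
rows `r, …, p_r - 1` down by one. So the rows below `r` always hold the values not yet removed,
in increasing order. Consequently the removed values form a permutation `σ`, and
`p_r = σ_r + #{i < r | σ_i > σ_r}` (a Lehmer code). Conversely, `p` is recovered from `σ`
because `v ↦ v + #{i < r | σ_i > v}` is injective on the values not yet removed.
-/

open Finset

lemma DecFrom.nuUpdate {k r : ℕ} {ν : ℕ → ℕ} (h : DecFrom k r ν) (p : ℕ) :
    DecFrom k (r + 1) (nuUpdate ν r p) := by
  intro i hi hik
  have hstep := h i (by omega) hik
  have hprev := h (i - 1) (by omega) (by omega)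
  rw [Nat.sub_add_cancel (by omega)] at hprev
  simp only [_root_.nuUpdate, Nat.add_sub_cancel]
  split_ifs <;> omega

lemma isTunnel_iff {k r : ℕ} {μ : ℕ → ℤ} {ν : ℕ → ℕ} {p q : ℕ} (hν : DecFrom k r ν) :
    IsTunnel k r μ ν p q ↔ r ≤ p ∧ p ≤ k ∧ q = ν p + 1 := by
  constructor
  · rintro ⟨⟨hrp, hpk, -⟩, hq⟩
    exact ⟨hrp, hpk, hq⟩
  · rintro ⟨hrp, hpk, rfl⟩
    refine ⟨⟨hrp, hpk, ?_⟩, rfl⟩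
    split_ifs with hpr
    · subst hpr
      exact ⟨le_rfl, by push_cast; exact le_max_left _ _⟩
    · have := hν (p - 1) (by omega) (by omega)
      rw [Nat.sub_add_cancel (by omega)] at this
      omega

section Shapes

variable (p : ℕ → ℕ)

lemma nuSeq_succ_apply (r x : ℕ) :
    nuSeq (fun _ => 0) p (r + 1) x =
      if r + 1 < x ∧ x ≤ p (r + 1) then nuSeq (fun _ => 0) p r (x - 1) + 1
      else nuSeq (fun _ => 0) p r x :=
  rfl

lemma decFrom_nuSeq (k r : ℕ) : DecFrom k (r + 1) (nuSeq (fun _ => 0) p r) := by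
  induction r with
  | zero => intro i _ _; rfl
  | succ r ih => exact ih.nuUpdate (p (r + 1))

lemma antitoneOn_nuSeq (r : ℕ) : AntitoneOn (nuSeq (fun _ => 0) p r) (Set.Ioi r) :=
  antitoneOn_of_succ_le Set.ordConnected_Ioi fun x _ hx _ =>
    decFrom_nuSeq p (x + 1) r x hx (Nat.lt_succ_self x)

lemma nuSeq_le {r x : ℕ} (hx : r < x) : nuSeq (fun _ => 0) p r x ≤ r := by
  induction r generalizing x with
  | zero => rfl
  | succ r ih =>
    have := ih (x := x) (by omega)
    have := ih (x := x - 1) (by omega)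
    rw [nuSeq_succ_apply]
    split_ifs <;> omega

end Shapes

section Values

variable (p : ℕ → ℕ)

/-- The value in row `x` after `r` steps; `chosenValue p r` is the one removed at step `r + 1`
(so the index is shifted by one against the paper's `σ_{r+1} = p_{r+1} - q_{r+1} + 1`). -/
def rowValue (r x : ℕ) : ℕ := x - nuSeq (fun _ => 0) p r x

def chosenValue (r : ℕ) : ℕ := rowValue p r (p (r + 1))

lemma rowValue_strictMonoOn (r : ℕ) : StrictMonoOn (rowValue p r) (Set.Ioi r) := by
  intro x (hx : r < x) y hy hxy
  have := antitoneOn_nuSeq p r hx hy hxy.le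
  have := nuSeq_le p hx
  simp only [rowValue]
  omega

lemma rowValue_succ {r x : ℕ} (hx : r + 1 < x) :
    rowValue p (r + 1) x = rowValue p r (if x ≤ p (r + 1) then x - 1 else x) := by
  have := nuSeq_le p (r := r) (x := x - 1) (by omega)
  simp only [rowValue, nuSeq_succ_apply]
  split_ifs <;> omega

variable {p}

lemma chosenValue_ne_rowValue {r : ℕ} (hp : ∀ j < r, j < p (j + 1)) :
    ∀ j < r, ∀ x, r < x → chosenValue p j ≠ rowValue p r x := by
  induction r with
  | zero => intro j hj; omega
  | succ r ih =>
    intro j hj x hx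
    rw [rowValue_succ p hx]
    have hpr := hp r (by omega)
    rcases Nat.lt_succ_iff_lt_or_eq.mp hj with hj | rfl
    · exact ih (fun i hi => hp i (by omega)) j hj _ (by split_ifs <;> omega)
    · refine (rowValue_strictMonoOn p j).injOn.ne (Set.mem_Ioi.mpr hpr) ?_ ?_ <;>
        split_ifs <;> first | exact Set.mem_Ioi.mpr (by omega) | omega

theorem card_lt_chosenValue_add_rowValue {r : ℕ} (hp : ∀ j < r, j < p (j + 1)) :
    ∀ x, r < x → #{j ∈ range r | rowValue p r x < chosenValue p j} + rowValue p r x = x := by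
  induction r with
  | zero => intro x _; simp [rowValue, nuSeq]
  | succ r ih =>
    intro x hx
    have hpr := hp r (by omega)
    have ih' := ih (fun i hi => hp i (by omega))
    have hmono := rowValue_strictMonoOn p r
    rw [range_add_one, filter_insert, rowValue_succ p hx]
    by_cases hxp : x ≤ p (r + 1)
    · have hlt : rowValue p r (x - 1) < chosenValue p r :=
        hmono (Set.mem_Ioi.mpr (by omega)) (Set.mem_Ioi.mpr hpr) (by omega)
      rw [if_pos hxp, if_pos hlt, card_insert_of_notMem (by simp)]
      have := ih' (x - 1) (by omega)
      omega
    · have hgt : chosenValue p r < rowValue p r x :=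
        hmono (Set.mem_Ioi.mpr hpr) (Set.mem_Ioi.mpr (by omega)) (by omega)
      rw [if_neg hxp, if_neg hgt.not_gt]
      exact ih' x (by omega)

theorem card_inversions_add_chosenValue {r : ℕ} (hp : ∀ j ≤ r, j < p (j + 1)) :
    #{j ∈ range r | chosenValue p r < chosenValue p j} + chosenValue p r = p (r + 1) :=
  card_lt_chosenValue_add_rowValue (fun j hj => hp j hj.le) _ (hp r le_rfl)

end Values

theorem add_card_filter_lt_injOn {ι : Type*} {s : Finset ι} {g : ι → ℕ} (hg : Set.InjOn g s) :
    Set.InjOn (fun v => v + #{j ∈ s | v < g j}) (g '' s)ᶜ := by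
  classical
  have key : ∀ v w, v < w → w ∉ g '' s → v + #{j ∈ s | v < g j} < w + #{j ∈ s | w < g j} := by
    intro v w hvw hw
    have hsplit : #{j ∈ s | v < g j} ≤ #{j ∈ s | w < g j} + #{j ∈ s | g j ∈ Ioo v w} := by
      refine (card_le_card fun j hj => ?_).trans (card_union_le _ _)
      simp only [mem_filter, mem_union, mem_Ioo] at hj ⊢
      have : g j ≠ w := fun h => hw ⟨j, hj.1, h⟩
      simp only [hj.1, true_and]
      omega
    have hmid : #{j ∈ s | g j ∈ Ioo v w} ≤ #(Ioo v w) :=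
      card_le_card_of_injOn g (fun j hj => (mem_filter.mp hj).2)
        (hg.mono fun j hj => (mem_filter.mp hj).1)
    rw [Nat.card_Ioo] at hmid
    omega
  intro v hv w hw h
  rcases lt_trichotomy v w with hlt | heq | hgt
  · exact absurd h (key v w hlt hw).ne
  · exact heq
  · exact absurd h (key w v hgt hv).ne'

section Lehmer

variable {k : ℕ} (σ : Equiv.Perm (Fin k))

lemma le_val_add_mcount (r : Fin k) : r.1 ≤ (σ r).1 + mcount σ r := by
  have hsplit : #(Iio r) ≤ #{i | i < r ∧ σ i < σ r} + mcount σ r := by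
    refine (card_le_card fun i hi => ?_).trans (card_union_le _ _)
    simp only [mem_Iio, mem_filter, mem_univ, true_and, mem_union] at hi ⊢
    have : σ i ≠ σ r := σ.injective.ne hi.ne
    omega
  have hbelow : #{i | i < r ∧ σ i < σ r} ≤ #(Iio (σ r)) :=
    card_le_card_of_injOn σ (fun i hi => by simp_all) σ.injective.injOn
  rw [Fin.card_Iio] at hsplit hbelow
  omega

lemma val_add_mcount_lt (r : Fin k) : (σ r).1 + mcount σ r < k := by
  have habove : mcount σ r ≤ #(Ioi (σ r)) :=
    card_le_card_of_injOn σ (fun i hi => by simp_all) σ.injective.injOn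
  rw [Fin.card_Ioi] at habove
  have := (σ r).2
  omega

lemma mcount_eq_card_range (r : Fin k) {g : ℕ → ℕ} (hg : ∀ i < r, g i = (σ i).1 + 1) :
    mcount σ r = #{j ∈ range r | (σ r).1 + 1 < g j} := by
  refine card_bij (fun i _ => i.1) (fun i hi => ?_) (fun i _ j _ h => Fin.ext h) fun j hj => ?_
  · simp only [mem_filter, mem_univ, true_and] at hi
    simp only [mem_filter, mem_range, hg i hi.1]
    exact ⟨hi.1, by omega⟩
  · simp only [mem_filter, mem_range] at hj
    have hjr : (⟨j, by omega⟩ : Fin k) < r := hj.1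
    refine ⟨⟨j, by omega⟩, ?_, rfl⟩
    simp only [mem_filter, mem_univ, true_and]
    rw [hg _ hjr] at hj
    exact ⟨hjr, by omega⟩

end Lehmer

section PermRows

variable {k : ℕ} (σ : Equiv.Perm (Fin k))

def permRows : ℕ → ℕ
  | 0 => 0
  | r + 1 => if h : r < k then (σ ⟨r, h⟩).1 + 1 + mcount σ ⟨r, h⟩ else 0

lemma permRows_succ (r : Fin k) : permRows σ (r + 1) = (σ r).1 + 1 + mcount σ r :=
  dif_pos r.2

lemma permRows_eq_zero : ∀ r, r = 0 ∨ k < r → permRows σ r = 0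
  | 0, _ => rfl
  | r + 1, h => dif_neg (by omega)

lemma permRows_succ_bounds (r : Fin k) : r.1 < permRows σ (r + 1) ∧ permRows σ (r + 1) ≤ k := by
  rw [permRows_succ]
  exact ⟨by have := le_val_add_mcount σ r; omega, by have := val_add_mcount_lt σ r; omega⟩

theorem chosenValue_permRows (r : Fin k) : chosenValue (permRows σ) r = (σ r).1 + 1 := by
  obtain ⟨r, hr⟩ := r
  induction r using Nat.strong_induction_on with
  | _ r ih =>
  have hp : ∀ j ≤ r, j < permRows σ (j + 1) := fun j hj =>
    (permRows_succ_bounds σ ⟨j, by omega⟩).1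
  have hprev : ∀ i < (⟨r, hr⟩ : Fin k), chosenValue (permRows σ) i = (σ i).1 + 1 :=
    fun i hi => ih i hi i.2
  have hcount := card_inversions_add_chosenValue hp
  rw [permRows_succ σ ⟨r, hr⟩, mcount_eq_card_range σ _ hprev, add_comm] at hcount
  -- `chosenValue _ r` and `σ r + 1` both solve `v + #{j < r | v < chosenValue _ j} = p (r + 1)`,
  -- and neither is among the earlier values.
  refine add_card_filter_lt_injOn (s := range r) (fun i hi j hj hij => ?_) ?_ ?_ hcount
  · simp only [coe_range, Set.mem_Iio] at hi hj
    rw [hprev ⟨i, by omega⟩ hi, hprev ⟨j, by omega⟩ hj] at hij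
    exact congrArg Fin.val (σ.injective (Fin.ext (by omega) : σ ⟨i, _⟩ = σ ⟨j, _⟩))
  · rintro ⟨j, hj, hjr⟩
    exact chosenValue_ne_rowValue (fun j hj => hp j hj.le) j (by simpa using hj) _ (hp r le_rfl) hjr
  · rintro ⟨j, hj, hjr⟩
    simp only [coe_range, Set.mem_Iio] at hj
    rw [hprev ⟨j, by omega⟩ hj] at hjr
    exact hj.ne (congrArg Fin.val (σ.injective (Fin.ext (by omega) : σ ⟨j, _⟩ = σ ⟨r, hr⟩)))

end PermRows

namespace THC

variable {k : ℕ} {μ : ℕ → ℤ} (γ : THC k μ (fun _ => 0))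

lemma tunnel_succ {r : ℕ} (hr : r < k) :
    r < γ.p (r + 1) ∧ γ.p (r + 1) ≤ k ∧
      γ.q (r + 1) = nuSeq (fun _ => 0) γ.p r (γ.p (r + 1)) + 1 := by
  have := γ.tunnel (r + 1) (by omega) hr
  rwa [Nat.add_sub_cancel, isTunnel_iff (decFrom_nuSeq _ _ _)] at this

lemma q_add_chosenValue {r : ℕ} (hr : r < k) :
    γ.q (r + 1) + chosenValue γ.p r = γ.p (r + 1) + 1 := by
  obtain ⟨hrp, -, hq⟩ := γ.tunnel_succ hr
  have := nuSeq_le γ.p hrp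
  rw [hq, chosenValue, rowValue]
  omega

lemma chosenValue_mem {r : ℕ} (hr : r < k) : 1 ≤ chosenValue γ.p r ∧ chosenValue γ.p r ≤ k := by
  obtain ⟨hrp, hpk, -⟩ := γ.tunnel_succ hr
  have := nuSeq_le γ.p hrp
  rw [chosenValue, rowValue]
  omega

lemma chosenValue_injOn : Set.InjOn (chosenValue γ.p) (Set.Iio k) := by
  have hp : ∀ j < k, j < γ.p (j + 1) := fun j hj => (γ.tunnel_succ hj).1
  have hne : ∀ i j, i < j → j < k → chosenValue γ.p i ≠ chosenValue γ.p j := fun i j hij hj =>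
    chosenValue_ne_rowValue (fun i hi => hp i (by omega)) i hij _ (hp j hj)
  intro i (hi : i < k) j (hj : j < k) h
  by_contra hij
  rcases Nat.lt_or_gt_of_ne hij with hlt | hgt
  · exact hne i j hlt hj h
  · exact hne j i hgt hi h.symm

noncomputable def toPerm : Equiv.Perm (Fin k) :=
  Equiv.ofBijective (fun r => ⟨chosenValue γ.p r - 1, by have := γ.chosenValue_mem r.2; omega⟩) <|
    Finite.injective_iff_bijective.mp fun i j h => Fin.ext <|
      γ.chosenValue_injOn i.2 j.2 (by
        have := γ.chosenValue_mem i.2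
        have := γ.chosenValue_mem j.2
        simp only [Fin.mk.injEq] at h
        omega)

lemma toPerm_apply_add_one (r : Fin k) : (γ.toPerm r).1 + 1 = chosenValue γ.p r := by
  have := γ.chosenValue_mem r.2
  simp only [toPerm, Equiv.ofBijective_apply]
  omega

lemma permRows_toPerm : permRows γ.toPerm = γ.p := by
  funext r
  rcases r with _ | r
  · exact (γ.p_out 0 (Or.inl rfl)).symm
  by_cases hr : r < k
  · have hcount := card_inversions_add_chosenValue (p := γ.p) (r := r)
      fun j hj => (γ.tunnel_succ (lt_of_le_of_lt hj hr)).1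
    rw [permRows_succ γ.toPerm ⟨r, hr⟩,
      mcount_eq_card_range _ _ fun i _ => (γ.toPerm_apply_add_one i).symm, toPerm_apply_add_one]
    exact (add_comm _ _).trans hcount
  · rw [permRows_eq_zero _ _ (Or.inr (by omega)), γ.p_out _ (Or.inr (by omega))]

lemma ext_of_p {δ : THC k μ (fun _ => 0)} (h : γ.p = δ.p) : γ = δ := by
  have hq : γ.q = δ.q := by
    funext r
    rcases r with _ | r
    · rw [γ.q_out 0 (Or.inl rfl), δ.q_out 0 (Or.inl rfl)]
    by_cases hr : r < k
    · rw [(γ.tunnel_succ hr).2.2, (δ.tunnel_succ hr).2.2, h]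
    · rw [γ.q_out _ (Or.inr (by omega)), δ.q_out _ (Or.inr (by omega))]
  cases γ
  cases δ
  cases h
  cases hq
  rfl

variable (μ)

def ofRows (p : ℕ → ℕ) (hp : ∀ r < k, r < p (r + 1) ∧ p (r + 1) ≤ k)
    (hout : ∀ r, r = 0 ∨ k < r → p r = 0) : THC k μ (fun _ => 0) where
  p := p
  q r := if 1 ≤ r ∧ r ≤ k then nuSeq (fun _ => 0) p (r - 1) (p r) + 1 else 0
  tunnel r h1 h2 := by
    obtain ⟨r, rfl⟩ := Nat.exists_eq_add_one.mpr h1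
    rw [if_pos ⟨h1, h2⟩, Nat.add_sub_cancel, isTunnel_iff (decFrom_nuSeq _ _ _)]
    exact ⟨(hp r h2).1, (hp r h2).2, rfl⟩
  p_out := hout
  q_out r h := if_neg (by omega)

def ofPerm (σ : Equiv.Perm (Fin k)) : THC k μ (fun _ => 0) :=
  ofRows μ (permRows σ) (fun r hr => permRows_succ_bounds σ ⟨r, hr⟩) (permRows_eq_zero σ)

lemma ofPerm_p (σ : Equiv.Perm (Fin k)) :
    (ofPerm μ σ).p = permRows σ :=
  rfl

lemma toPerm_ofPerm (σ : Equiv.Perm (Fin k)) : (ofPerm μ σ).toPerm = σ :=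
  Equiv.ext fun r => Fin.ext <| by
    have := (ofPerm μ σ).toPerm_apply_add_one r
    rwa [ofPerm_p, chosenValue_permRows, Nat.add_right_cancel_iff] at this

lemma ofPerm_q (σ : Equiv.Perm (Fin k)) (r : Fin k) :
    (ofPerm μ σ).q (r + 1) = 1 + mcount σ r := by
  have hq := (ofPerm μ σ).q_add_chosenValue r.2
  rw [ofPerm_p, chosenValue_permRows, permRows_succ] at hq
  omega

end THC

noncomputable def thcEquivPerm (k : ℕ) (μ : ℕ → ℤ) :
    THC k μ (fun _ => 0) ≃ Equiv.Perm (Fin k) where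
  toFun := THC.toPerm
  invFun := THC.ofPerm μ
  left_inv γ := THC.ext_of_p _ γ.permRows_toPerm
  right_inv := THC.toPerm_ofPerm μ

/-- One-line values of `σ ∈ Equiv.Perm (Fin k)` at the 1-based position `r` are
`(σ ⟨r−1⟩).1 + 1`; the equation `σ_r = p_r − q_r + 1` is stated additively as
`σ_r + q_r = p_r + 1`. -/
theorem thc_equiv_perm_general (k : ℕ) (μ : ℕ → ℤ) :
    ∃ e : THC k μ (fun _ => 0) ≃ Equiv.Perm (Fin k),
      (∀ γ : THC k μ (fun _ => 0), ∀ r : Fin k,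
        (((e γ) r : ℕ) + 1) + γ.q (r.1 + 1) = γ.p (r.1 + 1) + 1) ∧
      (∀ σ : Equiv.Perm (Fin k), ∀ r : Fin k,
        (e.symm σ).p (r.1 + 1) = ((σ r : ℕ) + 1) + mcount σ r ∧
        (e.symm σ).q (r.1 + 1) = 1 + mcount σ r) := by
  refine ⟨thcEquivPerm k μ, fun γ r => ?_,
    fun σ r => ⟨permRows_succ σ r, THC.ofPerm_q μ σ r⟩⟩
  have hq := γ.q_add_chosenValue r.2
  rw [← γ.toPerm_apply_add_one] at hq
  exact (add_comm _ _).trans hq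

/-- **Proposition (bijection with permutations).** The map sending a tunnel hook
covering `γ` of `D_μ` with terminal cells `τ_r = (p_r, q_r)` to the sequence
`σ(γ)_r = p_r − q_r + 1` is a bijection onto `S_k`, whose inverse sends `σ` to the
tunnel hook covering with terminal cells `τ_r = (σ_r + m_r, 1 + m_r)` where
`m_r = #{ i < r : σ_i > σ_r }`.  (One-line values of `σ ∈ Equiv.Perm (Fin k)` at the
1-based position `r` are `(σ ⟨r−1⟩).1 + 1`; the equation `σ_r = p_r − q_r + 1` is
stated additively as `σ_r + q_r = p_r + 1`.) -/
theorem thc_equiv_perm (k : ℕ) (hk : 1 ≤ k) (μ : ℕ → ℤ) :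
    ∃ e : THC k μ (fun _ => 0) ≃ Equiv.Perm (Fin k),
      (∀ γ : THC k μ (fun _ => 0), ∀ r : Fin k,
        (((e γ) r : ℕ) + 1) + γ.q (r.1 + 1) = γ.p (r.1 + 1) + 1) ∧
      (∀ σ : Equiv.Perm (Fin k), ∀ r : Fin k,
        (e.symm σ).p (r.1 + 1) = ((σ r : ℕ) + 1) + mcount σ r ∧
        (e.symm σ).q (r.1 + 1) = 1 + mcount σ r) :=
  thc_equiv_perm_general k μ
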